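/- Let K be a compact Hausdorff space and D ⊆ K a dense countably compact subset such that D is countably closed in K and every bounded continuous real function on D extends continuously to K (i.e., K = βD). If D has a full retractional skeleton {r_s}_{s∈Γ}, then the continuous extensions R_s : K → K of the r_s form a retractional skeleton in K whose induced set equals D. -/

import Mathlib

open Filter

/-- A subset is countably compact: every countable open cover has a finite
subcover. -/
def IsCountablyCompactSet {X : Type*} [TopologicalSpace X] (S : Set X) : Prop :=
  ∀ U : ℕ → Set X, (∀ n, IsOpen (U n)) → S ⊆ ⋃ n, U n →
    ∃ t : Finset ℕ, S ⊆ ⋃ n ∈ t, U n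

/-- A retractional skeleton in a topological space `K`. -/
structure RetractionalSkeleton (K : Type*) [TopologicalSpace K]
    (Γ : Type*) [PartialOrder Γ] [IsDirected Γ (· ≤ ·)] [Nonempty Γ] where
  r : Γ → K → K
  continuous_r : ∀ s, Continuous (r s)
  retraction : ∀ s, r s ∘ r s = r s
  compact_range : ∀ s, IsCompact (Set.range (r s))
  metrizable_range : ∀ s, TopologicalSpace.MetrizableSpace (Set.range (r s))
  comm₁ : ∀ s t, s ≤ t → r s ∘ r t = r s
  comm₂ : ∀ s t, s ≤ t → r t ∘ r s = r s
  sup_seq : ∀ u : ℕ → Γ, StrictMono u →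
    ∃ t : Γ, IsLUB (Set.range u) t ∧
      ∀ x, Tendsto (fun n => r (u n) x) atTop (nhds (r t x))
  tendsto : ∀ x, Tendsto (fun s => r s x) atTop (nhds x)

/-!
The extensions agree with the `r s` on the dense set `D`, so every identity between
compositions of retractions passes to them, and `R s` maps `K` into the compact set `r s [D]`;
hence `R s [K] = r s [D]`, which also gives the induced set.

The real point is `R s x → x` for `x ∈ K \ D`. If `Γ` has a greatest element, its extension is
the identity. Otherwise, if the convergence fails, there are a continuous `g` and levels
`a < b < g x` with `g (R s x) < a` frequently. Since `x` lies in the open set where `g > b` and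
`g ∘ R s < a` for finitely many such `s`, density of `D` and fullness of the skeleton give
increasing `σ n` and `δ n ∈ r (σ n) [D]` with `g (δ n) > b` and `g (r (σ m) (δ n)) < a` for
`m < n`. For `t = sup σ n` all `δ n` lie in the compact metrizable set `r t [D]`; a limit `d` of a
subsequence has `g d ≥ b` and `g (r (σ m) d) ≤ a`, while `r (σ m) d → r t d = d`.
-/

open Set Topology

theorem tendsto_nhds_of_forall_continuous_eventually_le {X ι : Type*} [TopologicalSpace X]
    [CompletelyRegularSpace X] {l : Filter ι} {f : ι → X} {x : X}
    (h : ∀ g : X → ℝ, Continuous g → ∀ a < g x, ∀ᶠ i in l, a ≤ g (f i)) :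
    Tendsto f l (𝓝 x) := by
  refine (nhds_basis_opens x).tendsto_right_iff.2 fun U ⟨hxU, hUo⟩ => ?_
  obtain ⟨φ, hφ, hφx, hφU⟩ := completelyRegularSpace_iff_isOpen.1 ‹_› x U hUo hxU
  have hg : Continuous fun y => -(φ y : ℝ) := (continuous_subtype_val.comp hφ).neg
  have hφx' : -(1 / 2 : ℝ) < -(φ x : ℝ) := by simp [hφx]
  filter_upwards [h _ hg _ hφx'] with i hi
  by_contra hiU
  have hφi : (φ (f i) : ℝ) = 1 := congrArg Subtype.val (hφU hiU)
  linarith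

namespace RetractionalSkeleton

variable {Γ : Type*} [PartialOrder Γ] [IsDirected Γ (· ≤ ·)] [Nonempty Γ]

section

variable {X : Type*} [TopologicalSpace X] (sk : RetractionalSkeleton X Γ)

theorem r_apply_of_mem_range {s t : Γ} (hst : s ≤ t) {x : X} (hx : x ∈ range (sk.r s)) :
    sk.r t x = x := by
  obtain ⟨y, rfl⟩ := hx
  exact congrFun (sk.comm₂ s t hst) y

theorem range_subset_range {s t : Γ} (hst : s ≤ t) : range (sk.r s) ⊆ range (sk.r t) :=
  fun x hx => ⟨x, sk.r_apply_of_mem_range hst hx⟩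

theorem r_eq_id_of_isTop [T1Space X] {m : Γ} (hm : IsTop m) : sk.r m = id := by
  funext x
  have h := sk.tendsto x
  rw [atTop_eq_pure_of_isTop hm, tendsto_pure_left] at h
  exact pure_le_nhds_iff.1 h

theorem exists_le_r_apply_of_strictMono {σ : ℕ → Γ} (hσ : StrictMono σ) {δ : ℕ → X}
    (hδ : ∀ n, δ n ∈ range (sk.r (σ n))) {g : X → ℝ} (hg : Continuous g) {a b : ℝ}
    (hab : a < b) (hgδ : ∀ n, b < g (δ n)) :
    ∃ m n, m < n ∧ a ≤ g (sk.r (σ m) (δ n)) := by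
  by_contra! hcross
  obtain ⟨t, hlub, hconv⟩ := sk.sup_seq σ hσ
  have hδt : ∀ n, δ n ∈ range (sk.r t) := fun n =>
    sk.range_subset_range (hlub.1 ⟨n, rfl⟩) (hδ n)
  have := isCompact_iff_compactSpace.mp (sk.compact_range t)
  have := sk.metrizable_range t
  obtain ⟨d, ψ, hψ, hlim⟩ :=
    SeqCompactSpace.tendsto_subseq fun n => (⟨δ n, hδt n⟩ : range (sk.r t))
  have hlimX : Tendsto (fun k => δ (ψ k)) atTop (𝓝 (d : X)) :=
    (continuous_subtype_val.tendsto _).comp hlim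
  have hb : b ≤ g d :=
    ge_of_tendsto ((hg.tendsto _).comp hlimX) (Eventually.of_forall fun k => (hgδ _).le)
  have ha : ∀ m, g (sk.r (σ m) d) ≤ a := fun m =>
    le_of_tendsto (((hg.comp (sk.continuous_r _)).tendsto _).comp hlimX)
      (eventually_atTop.2 ⟨m + 1, fun k hk =>
        (hcross m (ψ k) (lt_of_lt_of_le hk hψ.le_apply)).le⟩)
  have hfix : sk.r t d = d := sk.r_apply_of_mem_range le_rfl d.2
  have hgd : Tendsto (fun m => g (sk.r (σ m) d)) atTop (𝓝 (g d)) := by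
    simpa only [hfix, Function.comp_def] using (hg.tendsto _).comp (hconv d)
  linarith [le_of_tendsto' hgd ha]

end

variable {K : Type*} [TopologicalSpace K] {D : Set K} (sk : RetractionalSkeleton D Γ)
  {R : Γ → K → K}

theorem extension_comp_eq [T2Space K] (hdense : Dense D) (hRcont : ∀ s, Continuous (R s))
    (hRext : ∀ (s : Γ) (x : D), R s x = (sk.r s x : K)) {s t u : Γ}
    (h : sk.r s ∘ sk.r t = sk.r u) : R s ∘ R t = R u :=
  ((hRcont s).comp (hRcont t)).ext_on hdense (hRcont u) fun z hz => by
    simp only [Function.comp_apply, hRext _ ⟨z, hz⟩, hRext]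
    exact congrArg Subtype.val (congrFun h ⟨z, hz⟩)

theorem range_extension [T2Space K] (hdense : Dense D) (hRcont : ∀ s, Continuous (R s))
    (hRext : ∀ (s : Γ) (x : D), R s x = (sk.r s x : K)) (s : Γ) :
    range (R s) = Subtype.val '' range (sk.r s) := by
  have himage : R s '' D = Subtype.val '' range (sk.r s) := by
    rw [image_eq_range, ← range_comp]
    exact congrArg range (funext (hRext s))
  refine (((hRcont s).range_subset_closure_image_dense hdense).trans ?_).antisymm
    (himage ▸ image_subset_range _ _)
  rw [himage, ((sk.compact_range s).image continuous_subtype_val).isClosed.closure_eq]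

theorem metrizableSpace_range_extension [T2Space K] (hdense : Dense D) (hRcont : ∀ s, Continuous (R s))
    (hRext : ∀ (s : Γ) (x : D), R s x = (sk.r s x : K)) (s : Γ) :
    TopologicalSpace.MetrizableSpace (range (R s)) := by
  have := sk.metrizable_range s
  have hemb : IsEmbedding (Subtype.val ∘ Subtype.val : range (sk.r s) → K) :=
    IsEmbedding.subtypeVal.comp IsEmbedding.subtypeVal
  rw [sk.range_extension hdense hRcont hRext s, image_eq_range]
  exact hemb.toHomeomorph.symm.isEmbedding.metrizableSpace

theorem tendsto_extension_apply_of_tendsto [T2Space K] (hdense : Dense D)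
    (hRcont : ∀ s, Continuous (R s)) (hRext : ∀ (s : Γ) (x : D), R s x = (sk.r s x : K))
    {u : ℕ → Γ} {t : Γ} (hut : ∀ n, u n ≤ t)
    (hconv : ∀ x : D, Tendsto (fun n => sk.r (u n) x) atTop (𝓝 (sk.r t x))) (x : K) :
    Tendsto (fun n => R (u n) x) atTop (𝓝 (R t x)) := by
  obtain ⟨w, hw, hwx⟩ : R t x ∈ Subtype.val '' range (sk.r t) :=
    sk.range_extension hdense hRcont hRext t ▸ mem_range_self x
  have hRu : ∀ n, R (u n) x = sk.r (u n) w := fun n => by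
    rw [← hRext, hwx, ← Function.comp_apply (f := R (u n)),
      sk.extension_comp_eq hdense hRcont hRext (sk.comm₁ _ _ (hut n))]
  rw [← hwx, ← sk.r_apply_of_mem_range le_rfl hw]
  simpa only [hRu, Function.comp_def] using (continuous_subtype_val.tendsto _).comp (hconv w)

theorem eventually_le_extension_apply [NoMaxOrder Γ] (hdense : Dense D)
    (hfull : ⋃ s, range (sk.r s) = univ) (hRcont : ∀ s, Continuous (R s))
    (hRext : ∀ (s : Γ) (x : D), R s x = (sk.r s x : K)) {g : K → ℝ} (hg : Continuous g)
    {x : K} {a : ℝ} (ha : a < g x) : ∀ᶠ s in atTop, a ≤ g (R s x) := by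
  by_contra hfreq
  simp only [not_eventually, not_le, frequently_atTop'] at hfreq
  obtain ⟨b, hab, hbx⟩ := exists_between ha
  set P : Γ × D → Prop := fun p => b < g p.2 ∧ p.2 ∈ range (sk.r p.1) ∧ g (R p.1 x) < a
  set Q : Γ × D → Γ × D → Prop := fun p q => p.1 < q.1 ∧ g (R p.1 q.2) < a
  have hstep : ∀ F : Finset (Γ × D), (∀ p ∈ F, P p) → ∃ q, P q ∧ ∀ p ∈ F, Q p q := by
    classical
    intro F hF
    set U := {z | b < g z} ∩ ⋂ p ∈ F, {z | g (R p.1 z) < a}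
    have hUo : IsOpen U := (isOpen_lt continuous_const hg).inter
      (isOpen_biInter_finset fun p _ => isOpen_lt (hg.comp (hRcont _)) continuous_const)
    have hxU : x ∈ U := ⟨hbx, mem_iInter₂.2 fun p hp => (hF p hp).2.2⟩
    obtain ⟨d, hdD, hdU⟩ := hdense.exists_mem_open hUo ⟨x, hxU⟩
    obtain ⟨s₀, hs₀⟩ := mem_iUnion.1 (hfull ▸ mem_univ (⟨d, hdD⟩ : D))
    obtain ⟨u, hu⟩ := (insert s₀ (F.image Prod.fst)).exists_le
    obtain ⟨s, hus, hs⟩ := hfreq u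
    refine ⟨(s, ⟨d, hdD⟩), ⟨hdU.1, sk.range_subset_range ?_ hs₀, hs⟩,
      fun p hp => ⟨?_, mem_iInter₂.1 hdU.2 p hp⟩⟩
    · exact (hu s₀ (Finset.mem_insert_self _ _)).trans hus.le
    · exact (hu p.1 (Finset.mem_insert_of_mem (Finset.mem_image_of_mem _ hp))).trans_lt hus
  obtain ⟨f, hfP, hfQ⟩ := exists_seq_of_forall_finset_exists P Q hstep
  obtain ⟨m, n, hmn, hle⟩ := sk.exists_le_r_apply_of_strictMono
    (fun m n h => (hfQ m n h).1) (fun n => (hfP n).2.1) (hg.comp continuous_subtype_val)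
    hab (fun n => (hfP n).1)
  have hlt : g (sk.r (f m).1 (f n).2) < a := hRext _ (f n).2 ▸ (hfQ m n hmn).2
  exact hle.not_gt hlt

theorem tendsto_extension_apply_nhds [CompactSpace K] [T2Space K] (hdense : Dense D)
    (hfull : ⋃ s, range (sk.r s) = univ) (hRcont : ∀ s, Continuous (R s))
    (hRext : ∀ (s : Γ) (x : D), R s x = (sk.r s x : K)) (x : K) :
    Tendsto (fun s => R s x) atTop (𝓝 x) := by
  by_cases htop : ∃ m : Γ, IsTop m
  · obtain ⟨m, hm⟩ := htop
    have hRm : R m = id := (hRcont m).ext_on hdense continuous_id fun z hz => by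
      rw [hRext m ⟨z, hz⟩, sk.r_eq_id_of_isTop hm, id, id]
    rw [atTop_eq_pure_of_isTop hm]
    simpa only [hRm, id] using tendsto_pure_nhds (fun s => R s x) m
  · have : NoMaxOrder Γ := ⟨fun m => (isTop_or_exists_gt m).resolve_left fun hm => htop ⟨m, hm⟩⟩
    exact tendsto_nhds_of_forall_continuous_eventually_le fun g hg a ha =>
      sk.eventually_le_extension_apply hdense hfull hRcont hRext hg ha

end RetractionalSkeleton

theorem extensions_of_full_skeleton_form_skeleton_inducing_D_general
    {K : Type*} [TopologicalSpace K] [CompactSpace K] [T2Space K]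
    (D : Set K) (hdense : Dense D)
    {Γ : Type*} [PartialOrder Γ] [IsDirected Γ (· ≤ ·)] [Nonempty Γ]
    (sk : RetractionalSkeleton (↥D) Γ)
    (hfull : (⋃ s, Set.range (sk.r s)) = (Set.univ : Set (↥D)))
    (R : Γ → K → K) (hRcont : ∀ s, Continuous (R s))
    (hRext : ∀ (s : Γ) (x : D), R s x = (sk.r s x : K)) :
    ∃ sk' : RetractionalSkeleton K Γ, (∀ s, sk'.r s = R s) ∧
      (⋃ s, Set.range (R s)) = D := by
  have hcomp : ∀ {s t u}, sk.r s ∘ sk.r t = sk.r u → R s ∘ R t = R u :=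
    sk.extension_comp_eq hdense hRcont hRext
  have hrange := sk.range_extension hdense hRcont hRext
  refine ⟨{ r := R
            continuous_r := hRcont
            retraction := fun s => hcomp (sk.retraction s)
            compact_range := fun s =>
              hrange s ▸ (sk.compact_range s).image continuous_subtype_val
            metrizable_range := sk.metrizableSpace_range_extension hdense hRcont hRext
            comm₁ := fun s t hst => hcomp (sk.comm₁ s t hst)
            comm₂ := fun s t hst => hcomp (sk.comm₂ s t hst)
            sup_seq := fun u hu => by
              obtain ⟨t, hlub, hconv⟩ := sk.sup_seq u hu
              exact ⟨t, hlub, sk.tendsto_extension_apply_of_tendsto hdense hRcont hRext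
                (fun n => hlub.1 ⟨n, rfl⟩) hconv⟩
            tendsto := sk.tendsto_extension_apply_nhds hdense hfull hRcont hRext }, fun _ => rfl, ?_⟩
  simp_rw [hrange, ← image_iUnion, hfull, image_univ, Subtype.range_coe]

theorem extensions_of_full_skeleton_form_skeleton_inducing_D
    {K : Type*} [TopologicalSpace K] [CompactSpace K] [T2Space K]
    (D : Set K) (hdense : Dense D) (hcc : IsCountablyCompactSet D)
    (hcclosed : ∀ C : Set K, C ⊆ D → C.Countable → closure C ⊆ D)
    (hβ : ∀ f : D → ℝ, Continuous f → (∃ C : ℝ, ∀ x, |f x| ≤ C) →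
      ∃ g : K → ℝ, Continuous g ∧ ∀ x : D, g x = f x)
    {Γ : Type*} [PartialOrder Γ] [IsDirected Γ (· ≤ ·)] [Nonempty Γ]
    (sk : RetractionalSkeleton (↥D) Γ)
    (hfull : (⋃ s, Set.range (sk.r s)) = (Set.univ : Set (↥D)))
    (R : Γ → K → K) (hRcont : ∀ s, Continuous (R s))
    (hRext : ∀ (s : Γ) (x : D), R s x = (sk.r s x : K)) :
    ∃ sk' : RetractionalSkeleton K Γ, (∀ s, sk'.r s = R s) ∧
      (⋃ s, Set.range (R s)) = D :=
  extensions_of_full_skeleton_form_skeleton_inducing_D_general D hdense sk hfull R hRcont hRext
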